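/- arXiv:1308.5741 — 3 statements merged into one kernel-verified Lean document; each statement's English description precedes it below -/
import Mathlib

section
/- If G is a nonempty finite simple graph with cyclomatic number k in which every vertex has degree at least 2 and no two vertices of degree exactly 2 are adjacent, then G has at most 5k − 5 vertices and at most 6k − 6 edges. -/
open SimpleGraph

/-- The cyclomatic number m − n + c of a finite simple graph, as an integer. -/
noncomputable def cyclomaticNumber (V : Type) [Fintype V] (G : SimpleGraph V) : ℤ :=
  (Nat.card G.edgeSet : ℤ) - (Fintype.card V : ℤ) + (Nat.card G.ConnectedComponent : ℤ)

/-- `b` lies strictly between `a` and `c`. -/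
def StrictBtw (a b c : ℕ) : Prop := (a < b ∧ b < c) ∨ (c < b ∧ b < a)

/-- Two edges cross in the 1-page drawing given by the vertex order `f`:
they have four distinct endpoints `u v x y` with exactly one of `x`, `y`
strictly between `u` and `v`. -/
def Cross1 {V : Type} (f : V ↪ ℕ) (e₁ e₂ : Sym2 V) : Prop :=
  ∃ u v x y : V, e₁ = s(u, v) ∧ e₂ = s(x, y) ∧
    u ≠ v ∧ u ≠ x ∧ u ≠ y ∧ v ≠ x ∧ v ≠ y ∧ x ≠ y ∧
    Xor' (StrictBtw (f u) (f x) (f v)) (StrictBtw (f u) (f y) (f v))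

/-- Number of unordered pairs of edges of `G` crossing in the 1-page drawing `f`. -/
noncomputable def numCross1 {V : Type} (G : SimpleGraph V) (f : V ↪ ℕ) : ℕ :=
  Nat.card {P : Set (Sym2 V) // ∃ e₁ e₂, e₁ ∈ G.edgeSet ∧ e₂ ∈ G.edgeSet ∧
    P = {e₁, e₂} ∧ Cross1 f e₁ e₂}

/-- Number of edges of `G` crossing at least one other edge in the 1-page drawing `f`. -/
noncomputable def numCrossedEdges1 {V : Type} (G : SimpleGraph V) (f : V ↪ ℕ) : ℕ :=
  Nat.card {e : Sym2 V // e ∈ G.edgeSet ∧ ∃ e' ∈ G.edgeSet, Cross1 f e e'}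

/-- The 1-page book crossing number. -/
noncomputable def cr1 {V : Type} (G : SimpleGraph V) : ℕ := ⨅ f : V ↪ ℕ, numCross1 G f

/-- The 1-page crossed-edge number. -/
noncomputable def ce1 {V : Type} (G : SimpleGraph V) : ℕ := ⨅ f : V ↪ ℕ, numCrossedEdges1 G f

/-- Two edges cross in the 2-page drawing `(f, σ)`: same page and 1-page crossing. -/
def Cross2 {V : Type} (f : V ↪ ℕ) (σ : Sym2 V → Bool) (e₁ e₂ : Sym2 V) : Prop :=
  σ e₁ = σ e₂ ∧ Cross1 f e₁ e₂

/-- Number of unordered pairs of edges of `G` crossing in the 2-page drawing `(f, σ)`. -/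
noncomputable def numCross2 {V : Type} (G : SimpleGraph V) (f : V ↪ ℕ) (σ : Sym2 V → Bool) : ℕ :=
  Nat.card {P : Set (Sym2 V) // ∃ e₁ e₂, e₁ ∈ G.edgeSet ∧ e₂ ∈ G.edgeSet ∧
    P = {e₁, e₂} ∧ Cross2 f σ e₁ e₂}

/-- Number of edges of `G` crossing at least one other edge in the 2-page drawing `(f, σ)`. -/
noncomputable def numCrossedEdges2 {V : Type} (G : SimpleGraph V) (f : V ↪ ℕ)
    (σ : Sym2 V → Bool) : ℕ :=
  Nat.card {e : Sym2 V // e ∈ G.edgeSet ∧ ∃ e' ∈ G.edgeSet, Cross2 f σ e e'}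

/-- The 2-page book crossing number. -/
noncomputable def cr2 {V : Type} (G : SimpleGraph V) : ℕ :=
  ⨅ f : V ↪ ℕ, ⨅ σ : Sym2 V → Bool, numCross2 G f σ

/-- The 2-page crossed-edge number. -/
noncomputable def ce2 {V : Type} (G : SimpleGraph V) : ℕ :=
  ⨅ f : V ↪ ℕ, ⨅ σ : Sym2 V → Bool, numCrossedEdges2 G f σ

/-- The graph obtained from `G` by subdividing the edge `uv`: the edge `uv` is
deleted and a new vertex `none` is joined to `u` and `v`. -/
def subdivide {V : Type} (G : SimpleGraph V) (u v : V) : SimpleGraph (Option V) where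
  Adj a b :=
    (∃ x y : V, a = some x ∧ b = some y ∧ G.Adj x y ∧ ¬(x = u ∧ y = v) ∧ ¬(x = v ∧ y = u)) ∨
    (a = none ∧ (b = some u ∨ b = some v)) ∨
    (b = none ∧ (a = some u ∨ a = some v))
  symm := ⟨fun a b h => by
    rcases h with ⟨x, y, ha, hb, hxy, h1, h2⟩ | h | h
    · exact Or.inl ⟨y, x, hb, ha, hxy.symm, fun ⟨p, q⟩ => h2 ⟨q, p⟩, fun ⟨p, q⟩ => h1 ⟨q, p⟩⟩
    · exact Or.inr (Or.inr h)
    · exact Or.inr (Or.inl h)⟩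
  loopless := ⟨fun a h => by
    rcases h with ⟨x, y, ha, hb, hxy, _, _⟩ | ⟨h1, h2 | h2⟩ | ⟨h1, h2 | h2⟩ <;>
      simp_all [G.loopless]⟩

/-- The graph obtained from `G` by contracting the edge `uv`: `v` is removed and
the merged vertex `u` becomes adjacent to every other former neighbor of `u` or `v`. -/
def contractEdge {V : Type} (G : SimpleGraph V) (u v : V) : SimpleGraph {x : V // x ≠ v} where
  Adj a b := a ≠ b ∧
    (G.Adj a.1 b.1 ∨ (a.1 = u ∧ G.Adj v b.1) ∨ (b.1 = u ∧ G.Adj a.1 v))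
  symm := ⟨fun a b h => by
    obtain ⟨hne, h⟩ := h
    refine ⟨hne.symm, ?_⟩
    rcases h with h | ⟨h1, h2⟩ | ⟨h1, h2⟩
    · exact Or.inl h.symm
    · exact Or.inr (Or.inr ⟨h1, h2.symm⟩)
    · exact Or.inr (Or.inl ⟨h1, h2.symm⟩)⟩
  loopless := ⟨fun a h => h.1 rfl⟩


/-! The degree-2 vertices `S` form an independent set, so their incident edges are pairwise
distinct and `2 |S| ≤ m`; every other vertex has degree at least 3, so the handshake lemma gives
`3 n - |S| ≤ 2 m`. Together `6 n ≤ 5 m`, i.e. `n ≤ 5 (m - n)` and `m ≤ 6 (m - n)`, and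
`m - n ≤ k - 1` because a nonempty graph has at least one component. -/

open Finset

namespace SimpleGraph

variable {V : Type*} [Fintype V] {G : SimpleGraph V} [DecidableRel G.Adj]

theorem sum_degree_le_card_edgeFinset_of_isIndepSet [DecidableEq V] {s : Finset V}
    (hs : G.IsIndepSet (s : Set V)) : ∑ v ∈ s, G.degree v ≤ #G.edgeFinset := by
  have hdisj : (s : Set V).PairwiseDisjoint (G.incidenceFinset ·) := by
    intro u hu w hw huw
    rw [Function.onFun, Finset.disjoint_left]
    intro e heu hew
    rw [mem_incidenceFinset] at heu hew
    exact hs hu hw huw (G.adj_of_mem_incidenceSet huw heu hew)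
  calc ∑ v ∈ s, G.degree v = #(s.biUnion (G.incidenceFinset ·)) := by
        rw [card_biUnion hdisj]
        simp only [card_incidenceFinset_eq_degree]
    _ ≤ #G.edgeFinset := card_le_card <| biUnion_subset.mpr fun v _ e he =>
        mem_edgeFinset.mpr ((mem_incidenceFinset G v e).mp he).1

theorem two_mul_card_degree_eq_two_le_card_edgeFinset [DecidableEq V]
    (hno2adj : ∀ u w : V, G.Adj u w → G.degree u = 2 → G.degree w ≠ 2) :
    2 * #{v | G.degree v = 2} ≤ #G.edgeFinset := by
  have hindep : G.IsIndepSet (({v | G.degree v = 2} : Finset V) : Set V) := by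
    intro u hu w hw _ hadj
    simp only [coe_filter, mem_univ, true_and, Set.mem_ofPred_eq] at hu hw
    exact hno2adj u w hadj hu hw
  calc 2 * #{v | G.degree v = 2} = ∑ v ∈ {v | G.degree v = 2}, G.degree v := by
        rw [sum_congr rfl fun v hv => (mem_filter.mp hv).2, sum_const, smul_eq_mul, mul_comm]
    _ ≤ #G.edgeFinset := sum_degree_le_card_edgeFinset_of_isIndepSet hindep

theorem three_mul_card_le_two_mul_card_edgeFinset_add [DecidableEq V]
    (hdeg : ∀ v : V, 2 ≤ G.degree v) :
    3 * Fintype.card V ≤ 2 * #G.edgeFinset + #{v | G.degree v = 2} := by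
  rw [← sum_degrees_eq_twice_card_edges, card_filter, ← sum_add_distrib, ← card_univ,
    mul_comm, ← smul_eq_mul, ← sum_const]
  refine sum_le_sum fun v _ => ?_
  have := hdeg v
  split_ifs <;> omega

theorem six_mul_card_le_five_mul_card_edgeSet (hdeg : ∀ v : V, 2 ≤ G.degree v)
    (hno2adj : ∀ u w : V, G.Adj u w → G.degree u = 2 → G.degree w ≠ 2) :
    6 * Fintype.card V ≤ 5 * Nat.card G.edgeSet := by
  classical
  rw [Nat.card_eq_fintype_card, ← edgeFinset_card]
  have := two_mul_card_degree_eq_two_le_card_edgeFinset hno2adj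
  have := three_mul_card_le_two_mul_card_edgeFinset_add hdeg
  omega

theorem card_edgeSet_sub_card_add_one_le_cyclomaticNumber {V : Type} [Fintype V] [Nonempty V]
    (G : SimpleGraph V) :
    (Nat.card G.edgeSet : ℤ) - Fintype.card V + 1 ≤ cyclomaticNumber V G := by
  have : 1 ≤ Nat.card G.ConnectedComponent := Nat.card_pos
  rw [cyclomaticNumber]
  omega

end SimpleGraph

theorem stmt7_general {V : Type} [Fintype V] [Nonempty V]
    (G : SimpleGraph V) [DecidableRel G.Adj] (k : ℕ)
    (hk : cyclomaticNumber V G = (k : ℤ))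
    (hdeg : ∀ v : V, 2 ≤ G.degree v)
    (hno2adj : ∀ u w : V, G.Adj u w → G.degree u = 2 → G.degree w ≠ 2) :
    (Fintype.card V : ℤ) ≤ 5 * (k : ℤ) - 5 ∧
    (Nat.card G.edgeSet : ℤ) ≤ 6 * (k : ℤ) - 6 := by
  have hcard := G.six_mul_card_le_five_mul_card_edgeSet hdeg hno2adj
  have hcyc := G.card_edgeSet_sub_card_add_one_le_cyclomaticNumber
  rw [hk] at hcyc
  omega

/-- If `G` is a nonempty finite simple graph with cyclomatic number `k`
in which every vertex has degree at least 2 and no two vertices of degree exactly 2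
are adjacent, then `G` has at most `5k - 5` vertices and at most `6k - 6` edges. -/
theorem stmt7 {V : Type} [Fintype V] [DecidableEq V] [Nonempty V]
    (G : SimpleGraph V) [DecidableRel G.Adj] (k : ℕ)
    (hk : cyclomaticNumber V G = (k : ℤ))
    (hdeg : ∀ v : V, 2 ≤ G.degree v)
    (hno2adj : ∀ u w : V, G.Adj u w → G.degree u = 2 → G.degree w ≠ 2) :
    (Fintype.card V : ℤ) ≤ 5 * (k : ℤ) - 5 ∧
    (Nat.card G.edgeSet : ℤ) ≤ 6 * (k : ℤ) - 6 :=
  stmt7_general G k hk hdeg hno2adj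
end

section
/- Every finite simple graph G with cyclomatic number k admits a 2-page book drawing in which at most k edges cross at least one other edge and at most k(k−1)/2 unordered pairs of edges cross; consequently cr2(G) ≤ k(k−1)/2 and ce2(G) ≤ k. -/
open SimpleGraph

/-! Take a spanning forest `F` of `G`. A forest has a 1-page drawing without crossings: delete
a leaf edge, draw the rest, and move the leaf right after its neighbour. With the edges of `F` on
one page and the other edges on the second, every crossing edge lies outside `F`. There are
`m(G) - m(F) ≤ k` such edges, because `F` has the components of `G` and every graph satisfies
`n ≤ m + c`: the kernel of the incidence map `ℝ^V → ℝ^E` has dimension `c`. -/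

lemma StrictMono.strictBtw_iff {φ : ℕ → ℕ} (hφ : StrictMono φ) {a b c : ℕ} :
    StrictBtw (φ a) (φ b) (φ c) ↔ StrictBtw a b c := by
  simp only [StrictBtw, hφ.lt_iff_lt]

section Drawing

variable {V : Type}

lemma Cross1.symm {f : V ↪ ℕ} {e₁ e₂ : Sym2 V} (h : Cross1 f e₁ e₂) : Cross1 f e₂ e₁ := by
  obtain ⟨u, v, x, y, rfl, rfl, huv, hux, huy, hvx, hvy, hxy, hxor⟩ := h
  refine ⟨x, y, u, v, rfl, rfl, hxy, hux.symm, hvx.symm, huy.symm, hvy.symm, huv, ?_⟩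
  have := f.injective.ne huv
  have := f.injective.ne hux
  have := f.injective.ne huy
  have := f.injective.ne hvx
  have := f.injective.ne hvy
  have := f.injective.ne hxy
  refine xor_def.mpr ?_
  replace hxor := xor_def.mp hxor
  unfold StrictBtw at *
  omega

lemma Cross1.ne {f : V ↪ ℕ} {e₁ e₂ : Sym2 V} (h : Cross1 f e₁ e₂) : e₁ ≠ e₂ := by
  obtain ⟨u, v, x, y, rfl, rfl, -, hux, huy, -⟩ := h
  intro he
  rcases Sym2.eq_iff.mp he with ⟨h, -⟩ | ⟨h, -⟩
  exacts [hux h, huy h]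

lemma Cross2.symm {f : V ↪ ℕ} {σ : Sym2 V → Bool} {e₁ e₂ : Sym2 V} (h : Cross2 f σ e₁ e₂) :
    Cross2 f σ e₂ e₁ :=
  ⟨h.1.symm, h.2.symm⟩

lemma cross1_iff_of_eq_comp {f g : V ↪ ℕ} {φ : ℕ → ℕ} (hφ : StrictMono φ) {e₁ e₂ : Sym2 V}
    (h₁ : ∀ x ∈ e₁, g x = φ (f x)) (h₂ : ∀ x ∈ e₂, g x = φ (f x)) :
    Cross1 g e₁ e₂ ↔ Cross1 f e₁ e₂ := by
  constructor <;>
  · rintro ⟨u, v, x, y, rfl, rfl, hne, hxor⟩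
    refine ⟨u, v, x, y, rfl, rfl, hne, ?_⟩
    simpa [h₁, h₂, hφ.strictBtw_iff] using hxor

lemma not_cross1_of_eq_add_one {g : V ↪ ℕ} {u v : V} (h : g v = g u + 1) (e : Sym2 V) :
    ¬Cross1 g s(u, v) e := by
  rintro ⟨a, b, x, y, hab, -, -, -, -, -, -, -, hxor⟩
  have hbtw : StrictBtw (g a) (g x) (g b) ∨ StrictBtw (g a) (g y) (g b) := Xor.or hxor
  rcases Sym2.eq_iff.mp hab with ⟨rfl, rfl⟩ | ⟨rfl, rfl⟩ <;>
  · unfold StrictBtw at hbtw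
    omega

end Drawing

/-- Doubling all positions leaves a free slot right after `u`, which `v` takes. -/
def moveAfter {V : Type} [DecidableEq V] (f : V ↪ ℕ) (u v : V) : V ↪ ℕ where
  toFun x := if x = v then 2 * f u + 1 else 2 * f x
  inj' x y h := by
    by_cases hx : x = v <;> by_cases hy : y = v <;> simp only [hx, hy, if_true, if_false] at h
    · exact hx.trans hy.symm
    all_goals first | omega | exact f.injective (by omega)

section MoveAfter

variable {V : Type} [DecidableEq V] (f : V ↪ ℕ) (u v : V)

lemma moveAfter_apply_self : moveAfter f u v v = 2 * f u + 1 := if_pos rfl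

lemma moveAfter_apply_of_ne {x : V} (hx : x ≠ v) : moveAfter f u v x = 2 * f x := if_neg hx

end MoveAfter

namespace SimpleGraph

variable {V : Type} {G F : SimpleGraph V}

theorem IsAcyclic.exists_adj_forall_adj_eq [Finite V] (hG : G.IsAcyclic)
    (hE : G.edgeSet.Nonempty) : ∃ u v, G.Adj u v ∧ ∀ w, G.Adj v w → w = u := by
  obtain ⟨e, he⟩ := hE
  induction e using Sym2.ind with | _ a b =>
  rw [mem_edgeSet] at he
  have : Nonempty V := ⟨a⟩
  obtain ⟨v, t, p, hp, hmax⟩ := Walk.exists_isPath_forall_isPath_length_le_length G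
  have hnil : ¬p.Nil := by
    intro h
    have := hmax _ _ (Walk.cons he Walk.nil) (Walk.IsPath.nil.cons (by simpa using he.ne))
    simp [h.length_eq_zero] at this
  refine ⟨p.snd, v, (p.adj_snd hnil).symm, fun w hw => ?_⟩
  by_contra hne
  have hw' : w ∉ p.support := fun h => hne (hG.eq_snd_of_adj_start hp hw h)
  have := hmax _ _ (Walk.cons hw.symm p) (hp.cons hw')
  simp at this

theorem IsAcyclic.exists_forall_not_cross1 [Finite V] (hG : G.IsAcyclic) :
    ∃ f : V ↪ ℕ, ∀ e₁ ∈ G.edgeSet, ∀ e₂ ∈ G.edgeSet, ¬Cross1 f e₁ e₂ := by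
  classical
  induction hn : G.edgeSet.ncard using Nat.strong_induction_on generalizing G with | _ n ih =>
  rcases G.edgeSet.eq_empty_or_nonempty with hE | hE
  · have := Fintype.ofFinite V
    exact ⟨(Fintype.equivFin V).toEmbedding.trans Fin.valEmbedding, by simp [hE]⟩
  obtain ⟨u, v, huv, hleaf⟩ := hG.exists_adj_forall_adj_eq hE
  have hE' : (G.deleteEdges {s(u, v)}).edgeSet = G.edgeSet \ {s(u, v)} := edgeSet_deleteEdges _
  have hlt : (G.deleteEdges {s(u, v)}).edgeSet.ncard < n := by
    rw [hE', ← hn]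
    exact Set.ncard_sdiff_singleton_lt_of_mem huv
  obtain ⟨f, hf⟩ := ih _ hlt (hG.anti (deleteEdges_le _)) rfl
  have hnext : moveAfter f u v v = moveAfter f u v u + 1 := by
    rw [moveAfter_apply_self, moveAfter_apply_of_ne _ _ _ huv.ne]
  have hdouble (e : Sym2 V) (he : e ∈ G.edgeSet) (hne : e ≠ s(u, v)) :
      ∀ x ∈ e, moveAfter f u v x = 2 * f x := by
    intro x hx
    refine moveAfter_apply_of_ne _ _ _ fun hxv => hne ?_
    induction e using Sym2.ind with | _ a b =>
    rcases Sym2.mem_iff.mp hx with rfl | rfl <;> subst hxv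
    · rw [hleaf b he, Sym2.eq_swap]
    · rw [hleaf a he.symm]
  refine ⟨moveAfter f u v, fun e₁ he₁ e₂ he₂ hcross => ?_⟩
  by_cases h₁ : e₁ = s(u, v)
  · exact not_cross1_of_eq_add_one hnext _ (h₁ ▸ hcross)
  by_cases h₂ : e₂ = s(u, v)
  · exact not_cross1_of_eq_add_one hnext _ (h₂ ▸ hcross.symm)
  refine hf e₁ (hE' ▸ ⟨he₁, h₁⟩) e₂ (hE' ▸ ⟨he₂, h₂⟩) ?_
  exact (cross1_iff_of_eq_comp (strictMono_mul_left_of_pos two_pos)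
    (hdouble e₁ he₁ h₁) (hdouble e₂ he₂ h₂)).mp hcross

theorem IsAcyclic.exists_cross2_not_mem_edgeSet [Finite V] (hF : F.IsAcyclic) :
    ∃ (f : V ↪ ℕ) (σ : Sym2 V → Bool), ∀ e₁ e₂, Cross2 f σ e₁ e₂ → e₁ ∉ F.edgeSet := by
  classical
  obtain ⟨f, hf⟩ := hF.exists_forall_not_cross1
  refine ⟨f, fun e => decide (e ∉ F.edgeSet), fun e₁ e₂ ⟨hσ, hcross⟩ he₁ => ?_⟩
  have he₂ : e₂ ∈ F.edgeSet := by simpa [he₁] using hσ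
  exact hf e₁ he₁ e₂ he₂ hcross

theorem card_le_card_edgeSet_add_card_connectedComponent [Fintype V] (G : SimpleGraph V) :
    Fintype.card V ≤ Nat.card G.edgeSet + Nat.card G.ConnectedComponent := by
  classical
  let δ : (V → ℝ) →ₗ[ℝ] (G.edgeSet → ℝ) :=
    LinearMap.pi fun e => LinearMap.proj (R := ℝ) (φ := fun _ : V => ℝ) e.1.out.1 -
      LinearMap.proj e.1.out.2
  have hker : LinearMap.ker δ = LinearMap.ker (G.lapMatrix ℝ).toLin' := by
    ext x
    simp only [LinearMap.mem_ker, Matrix.toLin'_apply, lapMatrix_mulVec_eq_zero_iff_forall_adj]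
    simp only [δ, funext_iff, LinearMap.pi_apply, LinearMap.sub_apply, LinearMap.coe_proj,
      Function.eval, Pi.zero_apply, sub_eq_zero, Subtype.forall]
    have hout (e : Sym2 V) : s(e.out.1, e.out.2) = e := Quot.out_eq e
    refine ⟨fun h i j hij => ?_, fun h e he => h _ _ (by rwa [← mem_edgeSet, hout])⟩
    have := h s(i, j) hij
    rcases Sym2.eq_iff.mp (hout s(i, j)) with ⟨h1, h2⟩ | ⟨h1, h2⟩
    · rwa [h1, h2] at this
    · rw [h1, h2] at this
      exact this.symm
  have hrank := δ.finrank_range_add_finrank_ker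
  have hle := (LinearMap.range δ).finrank_le
  rw [hker, ← card_connectedComponent_eq_finrank_ker_toLin'_lapMatrix] at hrank
  simp only [Module.finrank_fintype_fun_eq_card] at hrank hle
  rw [Nat.card_eq_fintype_card, Nat.card_eq_fintype_card]
  omega

theorem ncard_edgeSet_sdiff_le_cyclomaticNumber [Fintype V] (hFG : F ≤ G)
    (hreach : F.Reachable = G.Reachable) :
    ((G.edgeSet \ F.edgeSet).ncard : ℤ) ≤ cyclomaticNumber V G := by
  have hc : Nat.card F.ConnectedComponent = Nat.card G.ConnectedComponent := by
    unfold ConnectedComponent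
    rw [hreach]
  have hF := F.card_le_card_edgeSet_add_card_connectedComponent
  have hle := Set.ncard_le_ncard (edgeSet_mono hFG) (Set.toFinite _)
  rw [Set.ncard_sdiff (edgeSet_mono hFG) (Set.toFinite _)]
  rw [hc, Nat.card_coe_set_eq] at hF
  unfold cyclomaticNumber
  rw [Nat.card_coe_set_eq]
  omega

end SimpleGraph

section Counting

variable {V : Type} {G : SimpleGraph V} {f : V ↪ ℕ} {σ : Sym2 V → Bool} {B : Finset (Sym2 V)}

lemma numCrossedEdges2_le_card
    (hB : ∀ e₁ ∈ G.edgeSet, ∀ e₂ ∈ G.edgeSet, Cross2 f σ e₁ e₂ → e₁ ∈ B) :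
    numCrossedEdges2 G f σ ≤ B.card := by
  rw [numCrossedEdges2, ← Set.coe_ofPred, Nat.card_coe_set_eq, ← Set.ncard_coe_finset]
  exact Set.ncard_le_ncard (fun e ⟨he, e', he', h⟩ => hB e he e' he' h) B.finite_toSet

lemma numCross2_le_card_choose_two
    (hB : ∀ e₁ ∈ G.edgeSet, ∀ e₂ ∈ G.edgeSet, Cross2 f σ e₁ e₂ → e₁ ∈ B) :
    numCross2 G f σ ≤ B.card.choose 2 := by
  classical
  rw [numCross2, ← Set.coe_ofPred, Nat.card_coe_set_eq, ← Finset.card_powersetCard]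
  calc _ ≤ ((↑) '' (B.powersetCard 2 : Set (Finset (Sym2 V))) : Set (Set (Sym2 V))).ncard := by
        refine Set.ncard_le_ncard ?_ (Set.toFinite _)
        rintro _ ⟨e₁, e₂, he₁, he₂, rfl, h⟩
        refine ⟨{e₁, e₂}, Finset.mem_powersetCard.mpr ⟨?_, Finset.card_pair h.2.ne⟩, by simp⟩
        exact Finset.insert_subset (hB e₁ he₁ e₂ he₂ h)
          (Finset.singleton_subset_iff.mpr (hB e₂ he₂ e₁ he₁ h.symm))
    _ ≤ _ := (Set.ncard_image_le (Finset.finite_toSet _)).trans (Set.ncard_coe_finset _).le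

lemma cr2_le_numCross2 (G : SimpleGraph V) (f : V ↪ ℕ) (σ : Sym2 V → Bool) :
    cr2 G ≤ numCross2 G f σ :=
  (ciInf_le (OrderBot.bddBelow _) f).trans (ciInf_le (OrderBot.bddBelow _) σ)

lemma ce2_le_numCrossedEdges2 (G : SimpleGraph V) (f : V ↪ ℕ) (σ : Sym2 V → Bool) :
    ce2 G ≤ numCrossedEdges2 G f σ :=
  (ciInf_le (OrderBot.bddBelow _) f).trans (ciInf_le (OrderBot.bddBelow _) σ)

end Counting

/-- Every finite simple graph `G` with cyclomatic number `k` admits a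
2-page book drawing in which at most `k` edges cross at least one other edge and at
most `k(k-1)/2` unordered pairs of edges cross; consequently `cr2 G ≤ k(k-1)/2` and
`ce2 G ≤ k`. -/
theorem stmt8 {V : Type} [Fintype V] (G : SimpleGraph V) (k : ℕ)
    (hk : cyclomaticNumber V G = (k : ℤ)) :
    (∃ (f : V ↪ ℕ) (σ : Sym2 V → Bool),
        numCrossedEdges2 G f σ ≤ k ∧ numCross2 G f σ ≤ k * (k - 1) / 2) ∧
    cr2 G ≤ k * (k - 1) / 2 ∧ ce2 G ≤ k := by
  obtain ⟨F, hFG, hF, hreach⟩ := G.exists_isAcyclic_reachable_eq_le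
  obtain ⟨f, σ, hfσ⟩ := hF.exists_cross2_not_mem_edgeSet
  set B := (Set.toFinite (G.edgeSet \ F.edgeSet)).toFinset
  have hBk : B.card ≤ k := by
    have := SimpleGraph.ncard_edgeSet_sdiff_le_cyclomaticNumber hFG hreach
    rw [Set.ncard_eq_toFinset_card _ (Set.toFinite _), hk] at this
    exact_mod_cast this
  have hB : ∀ e₁ ∈ G.edgeSet, ∀ e₂ ∈ G.edgeSet, Cross2 f σ e₁ e₂ → e₁ ∈ B :=
    fun e₁ he₁ e₂ _ h => (Set.Finite.mem_toFinset _).mpr ⟨he₁, hfσ e₁ e₂ h⟩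
  have hce : numCrossedEdges2 G f σ ≤ k := (numCrossedEdges2_le_card hB).trans hBk
  have hcr : numCross2 G f σ ≤ k * (k - 1) / 2 := by
    rw [← Nat.choose_two_right]
    exact (numCross2_le_card_choose_two hB).trans (Nat.choose_le_choose 2 hBk)
  exact ⟨⟨f, σ, hce, hcr⟩, (cr2_le_numCross2 G f σ).trans hcr,
    (ce2_le_numCrossedEdges2 G f σ).trans hce⟩
end

section
/- If G is a nonempty finite simple graph with cyclomatic number k ≥ 1 in which every vertex has degree at least 2 and every connected set of vertices all having degree exactly 2 in G has at most 2k vertices, then G has at most 6k² vertices and at most 6k² edges. -/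
open SimpleGraph

/-!
Let `D` be the set of degree-2 vertices, `n`, `m`, `c` the numbers of vertices, edges and
components, so `m + c = n + k`. Double counting degrees shows that there are at most
`2(k - c)` vertices of degree at least 3, and at most `6(k - c)` edges between them and `D`.
A component of `G[D]` that sends no edge out of `D` is a whole cycle component of `G`, and one
that does sends out an even, hence at least two, number of edges (its vertices all have degree
2). So `G[D]` has at most `c + 3(k - c) ≤ 3k - 2` components, each with at most `2k` vertices,
whence `n ≤ 2k(3k - 2) + 2(k - 1) < 6k²` and `m = n + k - c < 6k²`.
-/

open Finset

namespace SimpleGraph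

variable {V : Type*} {G : SimpleGraph V}

theorem Reachable.mem_of_adj_mem {s : Set V} (hs : ∀ ⦃v w⦄, v ∈ s → G.Adj v w → w ∈ s)
    {u v : V} (huv : G.Reachable u v) (hu : u ∈ s) : v ∈ s := by
  obtain ⟨p⟩ := huv
  induction p with
  | nil => exact hu
  | cons h _ ih => exact ih (hs hu h)

theorem ConnectedComponent.connected_induce_image_supp {s : Set V}
    (C : (G.induce s).ConnectedComponent) : (G.induce (Subtype.val '' C.supp)).Connected := by
  let φ : C.toSimpleGraph →g G.induce (Subtype.val '' C.supp) :=
    { toFun := fun x => ⟨x.1.1, x.1, x.2, rfl⟩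
      map_rel' := id }
  refine C.connected_toSimpleGraph.map φ ?_
  rintro ⟨_, x, hx, rfl⟩
  exact ⟨⟨x, hx⟩, rfl⟩

variable (G) [DecidableEq V] [DecidableRel G.Adj]

theorem sum_connectedComponent_induce_sum_supp {M : Type*} [AddCommMonoid M]
    (s : Finset V) (f : V → M) :
    ∑ C : (G.induce (s : Set V)).ConnectedComponent, ∑ x ∈ C.supp.toFinset, f x =
      ∑ v ∈ s, f v := by
  classical
  rw [← sum_coe_sort s f]
  convert sum_fiberwise univ (G.induce s).connectedComponentMk (fun x => f x) using 3 with C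
  ext
  simp

theorem card_le_card_connectedComponent_induce_mul (s : Finset V) {K : ℕ}
    (h : ∀ t ⊆ (s : Set V), (G.induce t).Connected → t.ncard ≤ K) :
    #s ≤ Nat.card (G.induce (s : Set V)).ConnectedComponent * K := by
  have hC (C : (G.induce (s : Set V)).ConnectedComponent) : #C.supp.toFinset ≤ K := by
    rw [← Set.ncard_eq_toFinset_card', ← Set.ncard_image_of_injective _ Subtype.val_injective]
    exact h _ (by rintro _ ⟨x, -, rfl⟩; exact x.2) C.connected_induce_image_supp
  calc #s = ∑ C : (G.induce (s : Set V)).ConnectedComponent, #C.supp.toFinset := by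
        simp only [card_eq_sum_ones]
        exact (G.sum_connectedComponent_induce_sum_supp s fun _ => 1).symm
    _ ≤ ∑ _C : (G.induce (s : Set V)).ConnectedComponent, K := sum_le_sum fun C _ => hC C
    _ = _ := by simp [Nat.card_eq_fintype_card]

variable [Fintype V]

theorem even_sum_card_neighborFinset_inter (s : Finset V) :
    Even (∑ v ∈ s, #(G.neighborFinset v ∩ s)) := by
  have hdeg (x : (s : Set V)) : (G.induce s).degree x = #(G.neighborFinset x ∩ s) := by
    rw [← card_neighborFinset_eq_degree, ← card_map (.subtype (· ∈ (s : Set V)))]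
    convert congrArg card (map_neighborFinset_induce (G := G) x) using 3
    · congr!
    · simp
  rw [← sum_coe_sort s]
  simp_rw [← hdeg]
  rw [sum_degrees_eq_twice_card_edges]
  exact even_two_mul _

theorem even_sum_card_neighborFinset_sdiff_iff (s : Finset V) :
    Even (∑ v ∈ s, #(G.neighborFinset v \ s)) ↔ Even (∑ v ∈ s, G.degree v) := by
  have h : ∑ v ∈ s, #(G.neighborFinset v ∩ s) + ∑ v ∈ s, #(G.neighborFinset v \ s) =
      ∑ v ∈ s, G.degree v := by
    simp only [← sum_add_distrib, card_inter_add_card_sdiff, card_neighborFinset_eq_degree]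
  rw [← h, Nat.even_add]
  simp [G.even_sum_card_neighborFinset_inter s]

theorem sum_card_neighborFinset_sdiff_le (s : Finset V) :
    ∑ v ∈ s, #(G.neighborFinset v \ s) ≤ ∑ w ∈ sᶜ, G.degree w := by
  have hout (v : V) : G.neighborFinset v \ s = bipartiteAbove G.Adj sᶜ v := by
    ext
    simp [bipartiteAbove, and_comm]
  simp_rw [hout, sum_card_bipartiteAbove_eq_sum_card_bipartiteBelow,
    ← card_neighborFinset_eq_degree]
  refine sum_le_sum fun w _ => card_le_card fun v hv => ?_
  simp_all [bipartiteBelow, adj_comm]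

variable {G}

noncomputable def ConnectedComponent.numEdgesLeaving {s : Finset V}
    (C : (G.induce (s : Set V)).ConnectedComponent) : ℕ :=
  ∑ x ∈ C.supp.toFinset, #(G.neighborFinset x \ s)

theorem sum_numEdgesLeaving (s : Finset V) :
    ∑ C : (G.induce (s : Set V)).ConnectedComponent, C.numEdgesLeaving =
      ∑ v ∈ s, #(G.neighborFinset v \ s) :=
  G.sum_connectedComponent_induce_sum_supp s fun v => #(G.neighborFinset v \ s)

theorem even_numEdgesLeaving {s : Finset V} (hs : ∀ v ∈ s, Even (G.degree v))
    (C : (G.induce (s : Set V)).ConnectedComponent) : Even C.numEdgesLeaving := by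
  set S := C.supp.toFinset.map (.subtype (· ∈ (s : Set V)))
  have hS (x : (s : Set V)) (hx : x ∈ C.supp) :
      G.neighborFinset x \ s = G.neighborFinset x \ S := by
    ext w
    simp only [mem_sdiff, mem_neighborFinset, S, mem_map, Set.mem_toFinset]
    refine and_congr_right fun hxw => ⟨fun hw ⟨y, _, hy⟩ => hw (hy ▸ y.2), fun hw hws => ?_⟩
    exact hw ⟨⟨w, hws⟩, C.mem_supp_of_adj_mem_supp hx hxw, rfl⟩
  have hleave : C.numEdgesLeaving = ∑ v ∈ S, #(G.neighborFinset v \ S) := by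
    rw [ConnectedComponent.numEdgesLeaving, sum_map]
    exact sum_congr rfl fun x hx => by rw [hS x (Set.mem_toFinset.1 hx)]; rfl
  rw [hleave, even_sum_card_neighborFinset_sdiff_iff]
  refine even_sum _ fun v hv => hs v ?_
  obtain ⟨x, -, rfl⟩ := mem_map.1 hv
  exact x.2

theorem injOn_map_induce_numEdgesLeaving_eq_zero (s : Finset V) :
    Set.InjOn (ConnectedComponent.map (Embedding.induce (s : Set V)).toHom)
      {C : (G.induce (s : Set V)).ConnectedComponent | C.numEdgesLeaving = 0} := by
  intro C₁ _ C₂ h₂ hmap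
  simp only [Set.mem_ofPred_eq, ConnectedComponent.numEdgesLeaving, sum_eq_zero_iff,
    card_eq_zero, Set.mem_toFinset, sdiff_eq_empty_iff_subset] at h₂
  have hclosed : ∀ ⦃v w⦄, v ∈ Subtype.val '' C₂.supp → G.Adj v w →
      w ∈ Subtype.val '' C₂.supp := by
    rintro _ w ⟨x, hx, rfl⟩ hxw
    have hw : w ∈ s := h₂ x hx ((mem_neighborFinset _ _ _).2 hxw)
    exact ⟨⟨w, hw⟩, C₂.mem_supp_of_adj_mem_supp hx hxw, rfl⟩
  induction C₁ using ConnectedComponent.ind with | h x => ?_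
  induction C₂ using ConnectedComponent.ind with | h y => ?_
  simp only [ConnectedComponent.map_mk] at hmap
  obtain ⟨x', hx', hxx'⟩ := (ConnectedComponent.exact hmap.symm).mem_of_adj_mem hclosed
    ⟨y, rfl, rfl⟩
  rw [← Subtype.ext hxx']
  exact hx'

theorem two_mul_card_connectedComponent_induce_le (s : Finset V)
    (hs : ∀ v ∈ s, Even (G.degree v)) :
    2 * Nat.card (G.induce (s : Set V)).ConnectedComponent ≤
      2 * Nat.card G.ConnectedComponent + ∑ v ∈ s, #(G.neighborFinset v \ s) := by
  classical
  have hclosed : #{C : (G.induce (s : Set V)).ConnectedComponent | C.numEdgesLeaving = 0} ≤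
      Nat.card G.ConnectedComponent := by
    rw [Nat.card_eq_fintype_card, ← card_univ]
    refine card_le_card_of_injOn (ConnectedComponent.map (Embedding.induce (s : Set V)).toHom)
      (fun _ _ => mem_univ _) ?_
    simpa using injOn_map_induce_numEdgesLeaving_eq_zero s
  have hopen : #{C : (G.induce (s : Set V)).ConnectedComponent | C.numEdgesLeaving ≠ 0} * 2 ≤
      ∑ C : (G.induce (s : Set V)).ConnectedComponent, C.numEdgesLeaving := by
    rw [← smul_eq_mul]
    refine (card_nsmul_le_sum _ _ 2 fun C hC => ?_).trans (sum_le_sum_of_subset (filter_subset _ _))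
    obtain ⟨r, hr⟩ := even_numEdgesLeaving hs C
    have := (mem_filter.1 hC).2
    omega
  rw [← sum_numEdgesLeaving, Nat.card_eq_fintype_card, ← card_univ,
    ← card_filter_add_card_filter_not (fun C => ConnectedComponent.numEdgesLeaving C = 0)]
  simp only [ne_eq] at hopen
  omega

end SimpleGraph

theorem stmt17_general {V : Type} [Fintype V] [DecidableEq V] [Nonempty V]
    (G : SimpleGraph V) [DecidableRel G.Adj] (k : ℕ)
    (hk : cyclomaticNumber V G = (k : ℤ))
    (hdeg : ∀ v : V, 2 ≤ G.degree v)
    (hpaths : ∀ S : Set V, (∀ v ∈ S, G.degree v = 2) → (G.induce S).Connected →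
      S.ncard ≤ 2 * k) :
    Fintype.card V ≤ 6 * k ^ 2 ∧ Nat.card G.edgeSet ≤ 6 * k ^ 2 := by
  set D : Finset V := {v | G.degree v = 2}
  have hD (v : V) : v ∈ D ↔ G.degree v = 2 := by simp [D]
  have hcomp := two_mul_card_connectedComponent_induce_le D fun v hv => (hD v).1 hv ▸ even_two
  have hsize := G.card_le_card_connectedComponent_induce_mul D (K := 2 * k)
    fun t ht hconn => hpaths t (fun v hv => (hD v).1 (ht hv)) hconn
  have hleave := G.sum_card_neighborFinset_sdiff_le D
  have hhigh : #Dᶜ * 3 ≤ ∑ w ∈ Dᶜ, G.degree w := by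
    rw [← smul_eq_mul]
    refine card_nsmul_le_sum _ _ 3 fun v hv => ?_
    have := hdeg v
    have := (hD v).not.1 (mem_compl.1 hv)
    omega
  have hsum : #D * 2 + ∑ w ∈ Dᶜ, G.degree w = 2 * #G.edgeFinset := by
    rw [← sum_const_nat fun v hv => (hD v).1 hv, sum_add_sum_compl,
      sum_degrees_eq_twice_card_edges]
  have hcard := card_add_card_compl D
  have hc : 1 ≤ Nat.card G.ConnectedComponent := Nat.card_pos
  have hm : Nat.card G.edgeSet = #G.edgeFinset := by
    rw [edgeFinset_card, Nat.card_eq_fintype_card]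
  rw [cyclomaticNumber, hm] at hk
  rw [hm]
  have hnumComp : Nat.card (G.induce (D : Set V)).ConnectedComponent + 2 ≤ 3 * k := by omega
  have hcardD : #D + 4 * k ≤ 6 * k ^ 2 := by nlinarith
  constructor <;> omega

/-- If `G` is a nonempty finite simple graph with cyclomatic number
`k ≥ 1` in which every vertex has degree at least 2 and every connected set of
vertices all having degree exactly 2 in `G` has at most `2k` vertices, then `G` has
at most `6k²` vertices and at most `6k²` edges. -/
theorem stmt17 {V : Type} [Fintype V] [DecidableEq V] [Nonempty V]
    (G : SimpleGraph V) [DecidableRel G.Adj] (k : ℕ) (hk1 : 1 ≤ k)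
    (hk : cyclomaticNumber V G = (k : ℤ))
    (hdeg : ∀ v : V, 2 ≤ G.degree v)
    (hpaths : ∀ S : Set V, (∀ v ∈ S, G.degree v = 2) → (G.induce S).Connected →
      S.ncard ≤ 2 * k) :
    Fintype.card V ≤ 6 * k ^ 2 ∧ Nat.card G.edgeSet ≤ 6 * k ^ 2 :=
  stmt17_general G k hk hdeg hpaths
end
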